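/- arXiv:1902.06941 — 2 statements merged into one kernel-verified Lean document; each statement's English description precedes it below -/
import Mathlib

section
/- Let X be an integrable real-valued random variable with continuous distribution function, α ∈ (0,1), and U : ℝ → ℝ increasing, continuous and concave with U(X) integrable, such that Assumption (A) holds. Then VaR_α(X) ≤ ρ_U^α(X) ≤ CTE_α(X). -/
/-!
The tail event `{X ≥ VaR_α(X)}` has probability at least `1 - α > 0`, since `F_X(x) < α` for
every `x < VaR_α(X)`. On it `U(X) ≥ U(VaR_α(X))`, so the conditional mean `m` of `U(X)` is at
least `U(VaR_α(X))`. By Assumption (A), `U x < U(VaR_α(X)) ≤ m` for every `x < VaR_α(X)`, hence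
`U⁻¹(m) ≥ VaR_α(X)`. Jensen's inequality for the concave `U` gives `m ≤ U(CTE_α(X))`, hence
`U⁻¹(m) ≤ CTE_α(X)`.
-/

open MeasureTheory Real Set

/-- Value at Risk at level `α`: `VaR_α(X) = inf {x | F_X(x) ≥ α}`. -/
noncomputable def VaR {Ω : Type*} [MeasurableSpace Ω] (P : Measure Ω) (X : Ω → ℝ) (α : ℝ) : ℝ :=
  sInf {x : ℝ | α ≤ (P {ω | X ω ≤ x}).toReal}

/-- The cumulative distribution function of `X` under `P`. -/
noncomputable def cdfR {Ω : Type*} [MeasurableSpace Ω] (P : Measure Ω) (X : Ω → ℝ) (x : ℝ) : ℝ :=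
  (P {ω | X ω ≤ x}).toReal

/-- Conditional expectation of `f` given the event `A`: `E[f | A]`. -/
noncomputable def condExpOn {Ω : Type*} [MeasurableSpace Ω] (P : Measure Ω) (f : Ω → ℝ)
    (A : Set Ω) : ℝ :=
  (∫ ω in A, f ω ∂P) / (P A).toReal

/-- The tail event `{X ≥ VaR_α(X)}`. -/
def tailEvent {Ω : Type*} [MeasurableSpace Ω] (P : Measure Ω) (X : Ω → ℝ) (α : ℝ) : Set Ω :=
  {ω | VaR P X α ≤ X ω}

/-- Generalized inverse `U⁻¹(y) = inf {x | U(x) ≥ y}`. -/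
noncomputable def ginv (U : ℝ → ℝ) (y : ℝ) : ℝ := sInf {x : ℝ | y ≤ U x}

/-- Tail Quasi-Linear Mean `ρ_U^α(X) = U⁻¹(E[U(X) | X ≥ VaR_α(X)])`. -/
noncomputable def TQLM {Ω : Type*} [MeasurableSpace Ω] (P : Measure Ω) (X : Ω → ℝ) (α : ℝ)
    (U : ℝ → ℝ) : ℝ :=
  ginv U (condExpOn P (fun ω => U (X ω)) (tailEvent P X α))

/-- Conditional Tail Expectation `CTE_α(X) = E[X | X ≥ VaR_α(X)]`. -/
noncomputable def CTE {Ω : Type*} [MeasurableSpace Ω] (P : Measure Ω) (X : Ω → ℝ) (α : ℝ) : ℝ :=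
  condExpOn P X (tailEvent P X α)

/-- Tail Conditional Entropic Risk Measure `ρ_γ^α(X) = (1/γ) log E[e^{γX} | X ≥ VaR_α(X)]`. -/
noncomputable def TCERM {Ω : Type*} [MeasurableSpace Ω] (P : Measure Ω) (X : Ω → ℝ) (α : ℝ)
    (γ : ℝ) : ℝ :=
  (1 / γ) * Real.log (condExpOn P (fun ω => Real.exp (γ * X ω)) (tailEvent P X α))

theorem ginv_le {U : ℝ → ℝ} {y x : ℝ} (hbdd : BddBelow {x | y ≤ U x}) (hx : y ≤ U x) :
    ginv U y ≤ x :=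
  csInf_le hbdd hx

theorem le_ginv {U : ℝ → ℝ} {y v : ℝ} (hne : ∃ x, y ≤ U x) (hlb : ∀ x, y ≤ U x → v ≤ x) :
    v ≤ ginv U y :=
  le_csInf hne hlb

theorem Monotone.le_of_apply_le_of_strictMonoOn_Ioo {U : ℝ → ℝ} {v ε x : ℝ} (hU : Monotone U)
    (hε : 0 < ε) (hstrict : StrictMonoOn U (Ioo (v - ε) v)) (hx : U v ≤ U x) : v ≤ x := by
  by_contra! hxv
  obtain ⟨y₁, hay₁, hy₁v⟩ := exists_between (max_lt hxv (sub_lt_self v hε))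
  obtain ⟨y₂, hy₁₂, hy₂v⟩ := exists_between hy₁v
  have hy₁ : y₁ ∈ Ioo (v - ε) v := ⟨(le_max_right _ _).trans_lt hay₁, hy₁v⟩
  have hy₂ : y₂ ∈ Ioo (v - ε) v := ⟨hy₁.1.trans hy₁₂, hy₂v⟩
  have hlt : U x < U v := calc
    U x ≤ U y₁ := hU ((le_max_left _ _).trans hay₁.le)
    _ < U y₂ := hstrict hy₁ hy₂ hy₁₂
    _ ≤ U v := hU hy₂v.le
  exact hlt.not_ge hx

section ConditionalMean

variable {Ω : Type*} [MeasurableSpace Ω] {P : Measure Ω} {A : Set Ω}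

theorem condExpOn_eq_setAverage (f : Ω → ℝ) : condExpOn P f A = ⨍ ω in A, f ω ∂P := by
  rw [setAverage_eq, condExpOn, smul_eq_mul, div_eq_inv_mul, Measure.real]

theorem le_condExpOn_of_forall_le [IsFiniteMeasure P] {f : Ω → ℝ} {c : ℝ} (hA : MeasurableSet A)
    (hPA : P A ≠ 0) (hf : IntegrableOn f A P) (hle : ∀ ω ∈ A, c ≤ f ω) :
    c ≤ condExpOn P f A := by
  have hPA_pos : 0 < (P A).toReal := ENNReal.toReal_pos hPA (measure_ne_top P A)
  have hint : ∫ _ in A, c ∂P ≤ ∫ ω in A, f ω ∂P :=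
    setIntegral_mono_on (integrableOn_const (measure_ne_top P A)) hf hA hle
  rw [setIntegral_const, smul_eq_mul, Measure.real] at hint
  rw [condExpOn, le_div_iff₀ hPA_pos]
  linarith

theorem ConcaveOn.condExpOn_comp_le [IsFiniteMeasure P] {U : ℝ → ℝ} {f : Ω → ℝ}
    (hU : ConcaveOn ℝ univ U) (hPA : P A ≠ 0) (hf : IntegrableOn f A P)
    (hUf : IntegrableOn (U ∘ f) A P) :
    condExpOn P (fun ω => U (f ω)) A ≤ U (condExpOn P f A) := by
  rw [condExpOn_eq_setAverage, condExpOn_eq_setAverage]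
  exact hU.le_map_set_average (hU.continuousOn isOpen_univ) isClosed_univ hPA
    (measure_ne_top P A) (.of_forall fun _ => mem_univ _) hf hUf

end ConditionalMean

section ValueAtRisk

variable {Ω : Type*} [MeasurableSpace Ω] {P : Measure Ω} [IsProbabilityMeasure P] {X : Ω → ℝ}
  {α : ℝ}

theorem cdfR_eq_cdf_map (hX : Measurable X) (x : ℝ) :
    cdfR P X x = ProbabilityTheory.cdf (P.map X) x := by
  have : IsProbabilityMeasure (P.map X) := Measure.isProbabilityMeasure_map hX.aemeasurable
  rw [ProbabilityTheory.cdf_eq_real, Measure.real, Measure.map_apply hX measurableSet_Iic]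
  rfl

theorem bddBelow_setOf_le_cdfR (hX : Measurable X) (hα : 0 < α) :
    BddBelow {x | α ≤ cdfR P X x} := by
  have : IsProbabilityMeasure (P.map X) := Measure.isProbabilityMeasure_map hX.aemeasurable
  have hbot := (ProbabilityTheory.tendsto_cdf_atBot (P.map X)).eventually (eventually_lt_nhds hα)
  obtain ⟨x₀, hx₀⟩ := Filter.eventually_atBot.mp hbot
  refine ⟨x₀, fun x hx => le_of_not_gt fun hxx₀ => ?_⟩
  have := hx₀ x hxx₀.le
  rw [← cdfR_eq_cdf_map hX] at this
  exact (hx.trans_lt this).false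

theorem cdfR_lt_of_lt_VaR (hX : Measurable X) (hα : 0 < α) {x : ℝ} (hx : x < VaR P X α) :
    cdfR P X x < α :=
  lt_of_not_ge fun hαx => hx.not_ge (csInf_le (bddBelow_setOf_le_cdfR hX hα) hαx)

theorem measure_lt_VaR_le (hX : Measurable X) (hα : 0 < α) :
    P {ω | X ω < VaR P X α} ≤ ENNReal.ofReal α := by
  set v := VaR P X α
  have hmono : Monotone fun n : ℕ => {ω | X ω ≤ v - 1 / (n + 1)} := by
    intro m n hmn ω hω
    exact hω.trans (sub_le_sub_left (Nat.one_div_le_one_div hmn) v)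
  have hunion : {ω | X ω < v} = ⋃ n : ℕ, {ω | X ω ≤ v - 1 / (n + 1)} := by
    ext ω
    simp only [mem_ofPred_eq, mem_iUnion]
    constructor
    · intro hω
      obtain ⟨n, hn⟩ := exists_nat_one_div_lt (sub_pos.mpr hω)
      exact ⟨n, by linarith⟩
    · rintro ⟨n, hn⟩
      exact hn.trans_lt (sub_lt_self v Nat.one_div_pos_of_nat)
  rw [hunion, hmono.measure_iUnion]
  refine iSup_le fun n => ?_
  rw [← ENNReal.ofReal_toReal (measure_ne_top P _)]
  exact ENNReal.ofReal_le_ofReal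
    (cdfR_lt_of_lt_VaR hX hα (sub_lt_self v Nat.one_div_pos_of_nat)).le

theorem one_sub_le_measure_tailEvent (hX : Measurable X) (hα : 0 < α) :
    1 - ENNReal.ofReal α ≤ P (tailEvent P X α) := by
  have htail : tailEvent P X α = {ω | X ω < VaR P X α}ᶜ := by
    ext ω
    simp [tailEvent]
  rw [htail, prob_compl_eq_one_sub (measurableSet_lt hX measurable_const)]
  exact tsub_le_tsub_left (measure_lt_VaR_le hX hα) 1

theorem measure_tailEvent_ne_zero (hX : Measurable X) (hα : α ∈ Ioo 0 1) :
    P (tailEvent P X α) ≠ 0 := by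
  refine (lt_of_lt_of_le ?_ (one_sub_le_measure_tailEvent hX hα.1)).ne'
  simpa [ENNReal.ofReal_lt_one] using hα.2

end ValueAtRisk

theorem VaR_le_TQLM_le_CTE_general
    {Ω : Type*} [MeasurableSpace Ω] (P : Measure Ω) [IsProbabilityMeasure P]
    (X : Ω → ℝ) (hX : Measurable X) (hXint : Integrable X P)
    (α : ℝ) (hα : α ∈ Set.Ioo (0:ℝ) 1)
    (U : ℝ → ℝ) (hU : Monotone U)
    (hUconc : ConcaveOn ℝ Set.univ U)
    (hUXint : Integrable (fun ω => U (X ω)) P)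
    (hA : ∃ ε > 0, StrictMonoOn U (Set.Ioo (VaR P X α - ε) (VaR P X α))) :
    VaR P X α ≤ TQLM P X α U ∧ TQLM P X α U ≤ CTE P X α := by
  obtain ⟨ε, hε, hstrict⟩ := hA
  have hPA := measure_tailEvent_ne_zero (P := P) hX hα
  have hjensen : condExpOn P (fun ω => U (X ω)) (tailEvent P X α) ≤ U (CTE P X α) :=
    hUconc.condExpOn_comp_le hPA hXint.integrableOn hUXint.integrableOn
  have hU_VaR_le : U (VaR P X α) ≤ condExpOn P (fun ω => U (X ω)) (tailEvent P X α) :=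
    le_condExpOn_of_forall_le (measurableSet_le measurable_const hX) hPA hUXint.integrableOn
      fun ω hω => hU hω
  have hlb : ∀ x, condExpOn P (fun ω => U (X ω)) (tailEvent P X α) ≤ U x → VaR P X α ≤ x :=
    fun x hx => hU.le_of_apply_le_of_strictMonoOn_Ioo hε hstrict (hU_VaR_le.trans hx)
  exact ⟨le_ginv ⟨_, hjensen⟩ hlb, ginv_le ⟨_, hlb⟩ hjensen⟩

/-- For concave increasing `U` satisfying Assumption (A),
`VaR_α(X) ≤ ρ_U^α(X) ≤ CTE_α(X)`. -/
theorem VaR_le_TQLM_le_CTE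
    {Ω : Type*} [MeasurableSpace Ω] (P : Measure Ω) [IsProbabilityMeasure P]
    (X : Ω → ℝ) (hX : Measurable X) (hXint : Integrable X P)
    (hFX : Continuous (cdfR P X))
    (α : ℝ) (hα : α ∈ Set.Ioo (0:ℝ) 1)
    (U : ℝ → ℝ) (hU : Monotone U) (hUc : Continuous U)
    (hUconc : ConcaveOn ℝ Set.univ U)
    (hUXint : Integrable (fun ω => U (X ω)) P)
    (hA : ∃ ε > 0, StrictMonoOn U (Set.Ioo (VaR P X α - ε) (VaR P X α))) :
    VaR P X α ≤ TQLM P X α U ∧ TQLM P X α U ≤ CTE P X α :=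
  VaR_le_TQLM_le_CTE_general P X hX hXint α hα U hU hUconc hUXint hA
end

section
/- Let X be a real-valued random variable with continuous distribution function F_X and quantile function F_X^{-1}(u) = inf{x : F_X(x) ≥ u}, and let V be uniformly distributed on (0,1). Then for every α ∈ (0,1), the events {F_X^{-1}(V) ≥ VaR_α(F_X^{-1}(V))} and {V ≥ α} coincide. -/
open MeasureTheory Real Set

/-!
For a distribution function `F`, the generalized inverse satisfies the Galois connection
`F⁻¹(u) ≤ x ↔ u ≤ F(x)` for `u ∈ (0,1)` (by right continuity of `F`). Hence `F⁻¹(V)` has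
distribution function `F`, and its VaR at level `α` is `F⁻¹(α)`. When `F` is continuous it takes
every value in `(0,1)`, so `F(F⁻¹(u)) = u`, and then for the almost sure event `V ∈ (0,1)`,
`F⁻¹(α) ≤ F⁻¹(V) ↔ α ≤ F(F⁻¹(V)) = V`.
-/

open ProbabilityTheory Filter Topology

theorem cdfR_eq_cdf_map_s8 {Ω : Type*} [MeasurableSpace Ω] (P : Measure Ω) [IsProbabilityMeasure P]
    {X : Ω → ℝ} (hX : Measurable X) : cdfR P X = cdf (P.map X) := by
  have := Measure.isProbabilityMeasure_map (μ := P) hX.aemeasurable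
  ext x
  rw [cdf_eq_real, Measure.real, Measure.map_apply hX measurableSet_Iic]
  rfl

section Quantile

variable (μ : Measure ℝ) {u : ℝ}

theorem ginv_cdf_le_iff (hu : u ∈ Ioo 0 1) (x : ℝ) : ginv (cdf μ) u ≤ x ↔ u ≤ cdf μ x := by
  set S := {x | u ≤ cdf μ x}
  have hne : S.Nonempty := ((tendsto_cdf_atTop μ).eventually_const_le hu.2).exists
  have hbdd : BddBelow S := by
    obtain ⟨b, hb⟩ := eventually_atBot.mp ((tendsto_cdf_atBot μ).eventually_lt_const hu.1)
    exact ⟨b, fun y hy => le_of_not_gt fun hyb => (hb y hyb.le).not_ge hy⟩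
  refine ⟨fun h => le_trans ?_ (monotone_cdf μ h), fun h => csInf_le hbdd h⟩
  have hright : ∀ᶠ y in 𝓝[>] sInf S, u ≤ cdf μ y := by
    filter_upwards [self_mem_nhdsWithin] with y hy
    obtain ⟨z, hzS, hzy⟩ := exists_lt_of_csInf_lt hne hy
    exact hzS.trans (monotone_cdf μ hzy.le)
  exact ge_of_tendsto (((cdf μ).right_continuous _).mono Ioi_subset_Ici_self) hright

theorem cdf_ginv_cdf (hcont : Continuous (cdf μ)) (hu : u ∈ Ioo 0 1) :
    cdf μ (ginv (cdf μ) u) = u := by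
  obtain ⟨a, ha⟩ := ((tendsto_cdf_atBot μ).eventually_lt_const hu.1).exists
  obtain ⟨b, hb⟩ := ((tendsto_cdf_atTop μ).eventually_const_lt hu.2).exists
  obtain ⟨c, hc⟩ := intermediate_value_univ a b hcont ⟨ha.le, hb.le⟩
  refine le_antisymm ?_ ((ginv_cdf_le_iff μ hu _).mp le_rfl)
  calc cdf μ (ginv (cdf μ) u) ≤ cdf μ c := monotone_cdf μ ((ginv_cdf_le_iff μ hu c).mpr hc.ge)
    _ = u := hc

theorem ginv_cdf_le_ginv_cdf_iff (hcont : Continuous (cdf μ)) {v : ℝ} (hu : u ∈ Ioo 0 1)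
    (hv : v ∈ Ioo 0 1) : ginv (cdf μ) u ≤ ginv (cdf μ) v ↔ u ≤ v := by
  rw [ginv_cdf_le_iff μ hu, cdf_ginv_cdf μ hcont hv]

end Quantile

theorem volume_restrict_Ioo_zero_one_Iic {t : ℝ} (ht : t ≤ 1) :
    volume.restrict (Ioo (0 : ℝ) 1) (Iic t) = ENNReal.ofReal t := by
  rw [Measure.restrict_apply measurableSet_Iic]
  refine le_antisymm ?_ ?_
  · calc volume (Iic t ∩ Ioo 0 1) ≤ volume (Ioc 0 t) :=
          measure_mono fun y hy => ⟨hy.2.1, hy.1⟩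
      _ = ENNReal.ofReal t := by rw [Real.volume_Ioc, sub_zero]
  · calc ENNReal.ofReal t = volume (Ioo 0 t) := by rw [Real.volume_Ioo, sub_zero]
      _ ≤ volume (Iic t ∩ Ioo 0 1) :=
          measure_mono fun y hy => ⟨hy.2.le, hy.1, hy.2.trans_le ht⟩

section UniformTransform

variable {Ω : Type*} [MeasurableSpace Ω] {P : Measure Ω} {V : Ω → ℝ}

theorem ae_mem_Ioo_of_map_eq (hV : Measurable V)
    (hunif : P.map V = volume.restrict (Ioo (0 : ℝ) 1)) : ∀ᵐ ω ∂P, V ω ∈ Ioo (0 : ℝ) 1 :=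
  ae_of_ae_map hV.aemeasurable (hunif ▸ ae_restrict_mem measurableSet_Ioo)

theorem cdfR_ginv_cdf_comp (μ : Measure ℝ) (hV : Measurable V)
    (hunif : P.map V = volume.restrict (Ioo (0 : ℝ) 1)) :
    cdfR P (fun ω => ginv (cdf μ) (V ω)) = cdf μ := by
  ext x
  have hevent : {ω | ginv (cdf μ) (V ω) ≤ x} =ᵐ[P] V ⁻¹' Iic (cdf μ x) := by
    filter_upwards [ae_mem_Ioo_of_map_eq hV hunif] with ω hω
    exact propext (ginv_cdf_le_iff μ hω x)
  rw [cdfR, measure_congr hevent, ← Measure.map_apply hV measurableSet_Iic, hunif,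
    volume_restrict_Ioo_zero_one_Iic (cdf_le_one μ x),
    ENNReal.toReal_ofReal (cdf_nonneg μ x)]

end UniformTransform

/-- For `V` uniform on `(0,1)` and `F_X` continuous, the events
`{F_X⁻¹(V) ≥ VaR_α(F_X⁻¹(V))}` and `{V ≥ α}` coincide (almost surely). -/
theorem quantile_tail_event_eq
    {Ω : Type*} [MeasurableSpace Ω] (P : Measure Ω) [IsProbabilityMeasure P]
    (X : Ω → ℝ) (hX : Measurable X) (hFX : Continuous (cdfR P X))
    (V : Ω → ℝ) (hV : Measurable V)
    (hunif : P.map V = volume.restrict (Set.Ioo (0:ℝ) 1))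
    (α : ℝ) (hα : α ∈ Set.Ioo (0:ℝ) 1) :
    {ω | VaR P (fun ω => ginv (cdfR P X) (V ω)) α ≤ ginv (cdfR P X) (V ω)}
      =ᵐ[P] {ω | α ≤ V ω} := by
  rw [cdfR_eq_cdf_map_s8 P hX] at hFX ⊢
  have hVaR : VaR P (fun ω => ginv (cdf (P.map X)) (V ω)) α = ginv (cdf (P.map X)) α := by
    change ginv (cdfR P _) α = _
    rw [cdfR_ginv_cdf_comp _ hV hunif]
  filter_upwards [ae_mem_Ioo_of_map_eq hV hunif] with ω hω
  rw [hVaR]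
  exact propext (ginv_cdf_le_ginv_cdf_iff _ hFX hα hω)
end
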